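/- Let (X, ω) be a compact Hermitian manifold of complex dimension n and fix a point x ∈ X. Then for every nonzero v, w ∈ T_x^{1,0}X, the average of the t-Gauduchon altered holomorphic bisectional curvature over the unit sphere S^{2n−1} ⊂ T_x^{1,0}X (with respect to the Lebesgue measure dσ) satisfies: the average over w of ᵗH̃BC_ω(v, w) equals (1/(n·|v|²)) Σ_{i,k,ℓ} ᵗR_{ik̄kℓ̄} v_i v̄_ℓ, i.e. the quadratic form of ᵗRic⁽³⁾ in v divided by n|v|², and the average over v of ᵗH̃BC_ω(v, w) equals (1/(n·|w|²)) Σ_{i,j,k} ᵗR_{ij̄kī} w_k w̄_j, i.e. the quadratic form of ᵗRic⁽⁴⁾ in w divided by n|w|². In particular, the t-Gauduchon altered holomorphic bisectional curvature dominates the third and fourth t-Gauduchon Ricci curvatures. -/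

import Mathlib

noncomputable section

open scoped BigOperators ComplexConjugate
open Complex

/-- Abstract model of a (connected) complex manifold `X` of complex dimension `n`.
Only the global invariants of `X` that occur in the statements are recorded;
each field is explained by its docstring. -/
structure ComplexManifoldModel (n : ℕ) : Type 1 where
  /-- the underlying set of points of `X` -/
  Point : Type
  /-- `X` is nonempty -/
  nonempty_point : Nonempty Point
  /-- `X` is compact -/
  IsCompact : Prop
  /-- `X` belongs to the Fujiki class `𝒞`, i.e. it is bimeromorphic to a compact Kähler
  manifold -/
  IsFujikiClassC : Prop
  /-- the Kodaira dimension `κ(X)` of `X`, where `⊥` stands for `−∞` -/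
  kodairaDim : WithBot ℤ
  /-- the statement that the first Chern class `c₁(K_X)` of the canonical bundle of `X`
  vanishes in de Rham cohomology `H²_dR(X, ℝ)` -/
  c1_canonical_deRham_eq_zero : Prop

/-- Abstract model of a Hermitian metric `ω` on the complex manifold `M` of complex
dimension `n`, together with the line of Gauduchon connections
`ᵗ∇ := t·ᶜ∇ + (1−t)·ˡ∇` (where `ᶜ∇` is the Chern connection, recovered at `t = 1`, and
`ˡ∇` is the Lichnerowicz connection, recovered at `t = 0`); all tensors are recorded through
their components in local unitary frames of `(T^{1,0}X, ω)`.
A `(1,1)`-form `√−1·Σ a_{ij̄} e^i ∧ ē^j` is recorded as the family of its coefficient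
matrices `a : Frame → Fin n → Fin n → ℂ` over all local unitary frames. -/
structure HermitianMetricModel (n : ℕ) (M : ComplexManifoldModel n) : Type 1 where
  /-- the (total space of the) bundle of local unitary frames `{e_1, …, e_n}` of
  `(T^{1,0}X, ω)` -/
  Frame : Type
  /-- the base point of a unitary frame -/
  base : Frame → M.Point
  /-- every point of `X` carries a local unitary frame -/
  base_surjective : Function.Surjective base
  /-- `R t f i j k l = ᵗR_{i j̄ k ℓ̄}`: the components, in the local unitary frame `f`, of the
  `(1,1)`-part of the curvature tensor `ᵗR` of the `t`-Gauduchon connection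
  `ᵗ∇ = t·ᶜ∇ + (1−t)·ˡ∇`; in particular `R 1` are the Chern curvature components
  `ᶜR_{i j̄ k ℓ̄}` and `R 0` the Lichnerowicz ones. -/
  R : ℝ → Frame → Fin n → Fin n → Fin n → Fin n → ℂ
  /-- Hermitian symmetry of the `(1,1)`-part of the curvature of a Hermitian connection -/
  R_conj : ∀ t f i j k l, conj (R t f i j k l) = R t f j i l k
  /-- `R20 t f i j k l = ᵗR_{i j k ℓ̄}`: the components of the `(2,0)`-part of the curvature
  of the `t`-Gauduchon connection -/
  R20 : ℝ → Frame → Fin n → Fin n → Fin n → Fin n → ℂ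
  /-- `T f i j k = ᶜT^k_{ij} = g(ᶜT(e_i, e_j), ē_k)`: the Chern torsion components in the
  local unitary frame `f` -/
  T : Frame → Fin n → Fin n → Fin n → ℂ
  /-- antisymmetry of the Chern torsion in its lower indices -/
  T_antisymm : ∀ f i j k, T f i j k = - T f j i k
  /-- `Tcov f i k j l = ᶜT^ℓ_{ik,j}`: the components of the covariant derivative of the
  Chern torsion with respect to the Chern connection -/
  Tcov : Frame → Fin n → Fin n → Fin n → Fin n → ℂ
  /-- the metric `ω` is Kähler, i.e. `dω = 0` -/
  IsKaehler : Prop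
  /-- a Hermitian metric is Kähler if and only if its Chern torsion vanishes identically -/
  isKaehler_iff_torsion_eq_zero : IsKaehler ↔ ∀ f i j k, T f i j k = 0
  /-- the metric `ω` is balanced, i.e. `d(ω^{n−1}) = 0` -/
  IsBalanced : Prop
  /-- the metric `ω` is conformally balanced, i.e. `e^u·ω` is balanced for some smooth
  real function `u` -/
  IsConformallyBalanced : Prop
  /-- the metric `ω` is locally conformally Kähler: near every point it is conformal to a
  Kähler metric -/
  IsLcK : Prop
  /-- the coefficient matrices of the `(1,1)`-form `∂∂*ω` (`∂*` the formal adjoint of `∂`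
  with respect to `ω`) -/
  pdpsOmega : Frame → Fin n → Fin n → ℂ
  /-- the coefficient matrices of the `(1,1)`-form `∂̄∂̄*ω` -/
  bpbpsOmega : Frame → Fin n → Fin n → ℂ
  /-- the coefficient matrices of the `(1,1)`-form `√−1·Λ(∂∂̄ω)`, where `Λ` is the adjoint
  of the Lefschetz operator of `ω` -/
  sqrtNegOneLambdaDDbarOmega : Frame → Fin n → Fin n → ℂ
  /-- the statement that the `3`-form `∂∂̄∂̄*ω` vanishes identically -/
  pdbar_dbarstar_omega_eq_zero : Prop
  /-- the statement that the `2`-form `∂̄∂*ω` vanishes identically -/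
  dbar_pstar_omega_eq_zero : Prop
  /-- the given `(1,1)`-form (recorded through its coefficient matrices in unitary frames)
  is `d`-closed -/
  IsDClosed : (Frame → Fin n → Fin n → ℂ) → Prop
  /-- the given `(1,1)`-form represents the first Aeppli–Chern class `c₁^{AC}(K_X^{-1})`
  of the anticanonical bundle in the Aeppli cohomology group `H_A^{1,1}(X)` -/
  RepresentsAeppliAnticanonical : (Frame → Fin n → Fin n → ℂ) → Prop
  /-- the given `(1,1)`-form represents the first Chern class `c₁(K_X^{-1})` in de Rham
  cohomology `H²_dR(X, ℝ)` -/
  RepresentsDeRhamAnticanonical : (Frame → Fin n → Fin n → ℂ) → Prop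
  /-- the given `2`-form represents `2π·c₁(K_X^{-1})` in de Rham cohomology -/
  Represents2PiDeRhamAnticanonical : (Frame → Fin n → Fin n → ℂ) → Prop
  /-- the given `(1,1)`-form represents `c₁(K_X^{-1})` in Dolbeault cohomology
  `H^{1,1}_{∂̄}(X)` -/
  RepresentsDolbeaultAnticanonical : (Frame → Fin n → Fin n → ℂ) → Prop
  /-- the given `(1,1)`-form represents the first Bott–Chern class `c₁^{BC}(K_X^{-1})` in
  Bott–Chern cohomology `H^{1,1}_{BC}(X)` -/
  RepresentsBottChernAnticanonical : (Frame → Fin n → Fin n → ℂ) → Prop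
  /-- the statement that `c₁(K_X^{-1}) = c₁^{AC}(K_X^{-1})` (the natural map
  `H²_dR(X,ℝ) → H_A^{1,1}(X)` identifies the two classes) -/
  c1_eq_c1AC : Prop
  /-- the `t`-Gauduchon scalar curvature `ᵗScal_ω = tr_ω(ᵗRic⁽¹⁾_ω)` as a function on `X` -/
  scal : ℝ → M.Point → ℝ
  /-- `ᵗScal_ω = Σ_{i,k} ᵗR_{i ī k k̄}` in any local unitary frame -/
  scal_spec : ∀ (t : ℝ) (f : Frame), scal t (base f) = (∑ i, ∑ k, R t f i i k k).re
  /-- the `t`-Gauduchon altered scalar curvature `ᵗS̃cal_ω = tr_ω(ᵗRic⁽³⁾_ω)` as a function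
  on `X` -/
  scalAlt : ℝ → M.Point → ℝ
  /-- `ᵗS̃cal_ω = Σ_{i,k} ᵗR_{i k̄ k ī}` in any local unitary frame -/
  scalAlt_spec : ∀ (t : ℝ) (f : Frame), scalAlt t (base f) = (∑ i, ∑ k, R t f i k k i).re
  /-- the function `d*τ` on `X`, where `τ` is the torsion `(1,0)`-form of `ω`
  (defined by `∂ω^{n−1} = τ ∧ ω^{n−1}`) and `d*` the formal adjoint of `d` -/
  dstarTau : M.Point → ℝ
  /-- the pointwise squared norm `|τ|²_ω` of the torsion `(1,0)`-form -/
  normSqTau : M.Point → ℝ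
  /-- `|τ|² = Σ_i |τ_i|²` with `τ_i = Σ_k ᶜT^k_{ik}` in any local unitary frame -/
  normSqTau_spec : ∀ f : Frame,
    normSqTau (base f) = ∑ i, Complex.normSq (∑ k, T f i k k)
  /-- the pointwise squared norm `|ᶜT|²_ω` of the Chern torsion -/
  normSqT : M.Point → ℝ
  /-- `|ᶜT|² = Σ_{i,j,k} |ᶜT^k_{ij}|²` in any local unitary frame -/
  normSqT_spec : ∀ f : Frame,
    normSqT (base f) = ∑ i, ∑ j, ∑ k, Complex.normSq (T f i j k)
  /-- integration against the volume form: `φ ↦ ∫_X φ ωⁿ` -/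
  integral : (M.Point → ℝ) → ℝ
  /-- the coefficient matrices of the `2`-form `d(Jϑ)`, where `ϑ` is the Lee form of `ω`
  (the unique `1`-form with `dω = ϑ ∧ ω` when `ω` is locally conformally Kähler) and `J`
  the complex structure -/
  dJLee : Frame → Fin n → Fin n → ℂ
  /-- `gRic1OfForm t α` records the coefficient matrices (in the unitary frames of `ω`) of
  the first `t`-Gauduchon Ricci form of the Hermitian metric whose associated `(1,1)`-form
  has coefficient matrices `α` (meaningful when `α` is positive definite) -/
  gRic1OfForm : ℝ → (Frame → Fin n → Fin n → ℂ) → (Frame → Fin n → Fin n → ℂ)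
  /-- applied to the form of `ω` itself (the identity matrix in unitary frames of `ω`),
  `gRic1OfForm` recovers the first `t`-Gauduchon Ricci form of `ω` -/
  gRic1OfForm_self : ∀ t : ℝ,
    gRic1OfForm t (fun _ i j => if i = j then 1 else 0) = fun f i j => ∑ k, R t f i j k k

namespace HermitianMetricModel

variable {n : ℕ} {M : ComplexManifoldModel n} (g : HermitianMetricModel n M)

/-- the coefficient matrices of the first `t`-Gauduchon Ricci form
`ᵗRic⁽¹⁾_ω = √−1·Σ_k ᵗR_{i j̄ k k̄} e^i ∧ ē^j` -/
def gRic1 (t : ℝ) : g.Frame → Fin n → Fin n → ℂ :=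
  fun f i j => ∑ k, g.R t f i j k k

/-- the coefficient matrices of the second `t`-Gauduchon Ricci form
`ᵗRic⁽²⁾_ω = √−1·Σ_i ᵗR_{i ī k ℓ̄} e^k ∧ ē^ℓ` -/
def gRic2 (t : ℝ) : g.Frame → Fin n → Fin n → ℂ :=
  fun f k l => ∑ i, g.R t f i i k l

/-- the coefficient matrices of the third `t`-Gauduchon Ricci form
`ᵗRic⁽³⁾_ω = √−1·Σ_k ᵗR_{i k̄ k ℓ̄} e^i ∧ ē^ℓ` -/
def gRic3 (t : ℝ) : g.Frame → Fin n → Fin n → ℂ :=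
  fun f i l => ∑ k, g.R t f i k k l

/-- the coefficient matrices of the fourth `t`-Gauduchon Ricci form
`ᵗRic⁽⁴⁾_ω = √−1·Σ_i ᵗR_{i j̄ k ī} e^k ∧ ē^j` -/
def gRic4 (t : ℝ) : g.Frame → Fin n → Fin n → ℂ :=
  fun f k j => ∑ i, g.R t f i j k i

/-- the coefficient matrices of the torsion `(1,1)`-form
`ᶜT^◇ = √−1·Σ_q ᶜT^k_{iq}·conj(ᶜT^k_{jq}) e^i ∧ ē^j` -/
def Tdiamond : g.Frame → Fin n → Fin n → ℂ :=
  fun f i j => ∑ q, ∑ k, g.T f i q k * conj (g.T f j q k)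

/-- the coefficient matrices of the torsion `(1,1)`-form
`ᶜT^° = √−1·Σ_{s,p} ᶜT^j_{sp}·conj(ᶜT^i_{sp}) e^i ∧ ē^j` -/
def Tcirc : g.Frame → Fin n → Fin n → ℂ :=
  fun f i j => ∑ s, ∑ p, g.T f s p j * conj (g.T f s p i)

/-- the coefficient matrices of the torsion `(1,1)`-form
`ᶜT^♡ = √−1·Σ_q ᶜT^j_{iq}·conj(ᶜT^k_{kq}) e^i ∧ ē^j` -/
def Theart : g.Frame → Fin n → Fin n → ℂ :=
  fun f i j => ∑ q, ∑ k, g.T f i q j * conj (g.T f k q k)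

/-- the conjugate of a `(1,1)`-form in the coefficient-matrix description -/
def conjForm (α : g.Frame → Fin n → Fin n → ℂ) : g.Frame → Fin n → Fin n → ℂ :=
  fun f i j => conj (α f j i)

/-- pointwise positive definiteness of a (real) `(1,1)`-form recorded through its coefficient
matrices in unitary frames -/
def FormPos (α : g.Frame → Fin n → Fin n → ℂ) : Prop :=
  ∀ f : g.Frame, ∀ v : Fin n → ℂ, v ≠ 0 →
    0 < (∑ i, ∑ j, α f i j * v i * conj (v j)).re

/-- pointwise negative definiteness -/
def FormNeg (α : g.Frame → Fin n → Fin n → ℂ) : Prop :=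
  ∀ f : g.Frame, ∀ v : Fin n → ℂ, v ≠ 0 →
    (∑ i, ∑ j, α f i j * v i * conj (v j)).re < 0

/-- pointwise nonnegativity (positive semidefiniteness) -/
def FormNonneg (α : g.Frame → Fin n → Fin n → ℂ) : Prop :=
  ∀ f : g.Frame, ∀ v : Fin n → ℂ,
    0 ≤ (∑ i, ∑ j, α f i j * v i * conj (v j)).re

/-- pointwise nonpositivity -/
def FormNonpos (α : g.Frame → Fin n → Fin n → ℂ) : Prop :=
  ∀ f : g.Frame, ∀ v : Fin n → ℂ,
    (∑ i, ∑ j, α f i j * v i * conj (v j)).re ≤ 0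

/-- the `t`-Gauduchon holomorphic sectional curvature
`ᵗHSC_ω(v) = ᵗR(v, v̄, v, v̄)/|v|⁴_ω`, evaluated on the components `v` of a `(1,0)`-tangent
vector in the unitary frame `f` -/
def hsc (t : ℝ) (f : g.Frame) (v : Fin n → ℂ) : ℝ :=
  (∑ i, ∑ j, ∑ k, ∑ l, g.R t f i j k l * v i * conj (v j) * v k * conj (v l)).re /
    (∑ i, Complex.normSq (v i)) ^ 2

/-- the `t`-Gauduchon holomorphic bisectional curvature
`ᵗHBC_ω(u, v) = ᵗR(u, ū, v, v̄)/(|u|²_ω·|v|²_ω)` in frame components -/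
def hbc (t : ℝ) (f : g.Frame) (u v : Fin n → ℂ) : ℝ :=
  (∑ i, ∑ j, ∑ k, ∑ l, g.R t f i j k l * u i * conj (u j) * v k * conj (v l)).re /
    ((∑ i, Complex.normSq (u i)) * (∑ i, Complex.normSq (v i)))

/-- the `t`-Gauduchon altered holomorphic bisectional curvature
`ᵗH̃BC_ω(u, v) = ᵗR(u, v̄, v, ū)/(|u|²_ω·|v|²_ω)` in frame components -/
def hbcAlt (t : ℝ) (f : g.Frame) (u v : Fin n → ℂ) : ℝ :=
  (∑ i, ∑ j, ∑ k, ∑ l, g.R t f i j k l * u i * conj (v j) * v k * conj (u l)).re /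
    ((∑ i, Complex.normSq (u i)) * (∑ i, Complex.normSq (v i)))

/-- the `t`-Gauduchon altered holomorphic sectional curvature
`ᵗH̃SC_ω(λ) = (1/|λ|²_ω)·Σ_{α,γ} (ᵗR_{α ᾱ γ γ̄} + ᵗR_{α γ̄ γ ᾱ})·λ_α·λ_γ`, a function of a
local unitary frame `f` and `λ ∈ ℝⁿ \ {0}` -/
def hscAlt (t : ℝ) (f : g.Frame) (lam : Fin n → ℝ) : ℝ :=
  (∑ a, ∑ c, ((g.R t f a a c c + g.R t f a c c a) * (lam a : ℂ) * (lam c : ℂ))).re /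
    ∑ i, (lam i) ^ 2

end HermitianMetricModel

open MeasureTheory

instance euclideanComplexMeasurableSpace (n : ℕ) :
    MeasurableSpace (EuclideanSpace ℂ (Fin n)) := borel _

instance euclideanComplexBorelSpace (n : ℕ) :
    BorelSpace (EuclideanSpace ℂ (Fin n)) := ⟨rfl⟩

/-- The Lebesgue (round) surface measure on the unit sphere `S^{2n−1} ⊂ ℂⁿ`, obtained from
an additive Haar measure on `ℂⁿ` by the polar decomposition; it is a positive multiple of
the round measure `dσ`, so averages against it agree with the normalized averages
`⨍ = ((n−1)!/(2πⁿ))∫_{S^{2n−1}} · dσ`. -/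
def sphereMeasure (n : ℕ) :
    Measure (Metric.sphere (0 : EuclideanSpace ℂ (Fin n)) 1) :=
  ((Module.Basis.ofVectorSpace ℝ (EuclideanSpace ℂ (Fin n))).addHaar).toSphere

/-!
The round measure on the unit sphere of `ℂⁿ` is invariant under all linear isometries, which
pins down its second moments: `∫ w̄ⱼ wₖ dσ = δⱼₖ σ(S)/n`. Indeed, reflecting the `j`-th
coordinate changes the sign of the off-diagonal moments, swapping two coordinates equalises the
diagonal ones, and the diagonal ones add up to `σ(S)` because `|w| = 1`. Hence a Hermitian form
averages over the sphere to its trace divided by `n`.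

For fixed `v`, `w ↦ ᵗR(v, w̄, w, v̄)` is such a form, with trace the `ᵗRic⁽³⁾`-form of `v`; for
fixed `w`, `v ↦ ᵗR(v, w̄, w, v̄)` is one with trace the `ᵗRic⁽⁴⁾`-form of `w`. A sign condition on
`ᵗH̃BC` passes to these averages, since an integrable function takes values both below and above
its mean.
-/

open Metric Set
open scoped Pointwise

namespace LinearIsometryEquiv

variable {R E : Type*} [Semiring R] [SeminormedAddCommGroup E] [Module R E]

def unitSphereHomeomorph (U : E ≃ₗᵢ[R] E) : sphere (0 : E) 1 ≃ₜ sphere (0 : E) 1 :=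
  U.toHomeomorph.subtype fun x => by simp

@[simp]
lemma coe_unitSphereHomeomorph_apply (U : E ≃ₗᵢ[R] E) (x : sphere (0 : E) 1) :
    (U.unitSphereHomeomorph x : E) = U x :=
  rfl

@[simp]
lemma coe_unitSphereHomeomorph_symm_apply (U : E ≃ₗᵢ[R] E) (x : sphere (0 : E) 1) :
    (U.unitSphereHomeomorph.symm x : E) = U.symm x :=
  rfl

end LinearIsometryEquiv

namespace MeasureTheory

lemma average_div_const {α : Type*} [MeasurableSpace α] (μ : Measure α) (F : α → ℝ) (c : ℝ) :
    ⨍ x, F x / c ∂μ = (⨍ x, F x ∂μ) / c := by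
  simp only [average_eq, integral_div, smul_eq_mul, mul_div_assoc]

namespace Measure

theorem map_linearIsometryEquiv_eq_self {E : Type*} [NormedAddCommGroup E]
    [InnerProductSpace ℝ E] [FiniteDimensional ℝ E] [MeasurableSpace E] [BorelSpace E]
    (μ : Measure E) [μ.IsAddHaarMeasure] (U : E ≃ₗᵢ[ℝ] E) : μ.map U = μ := by
  rw [isAddLeftInvariant_eq_smul μ volume, Measure.map_smul, U.measurePreserving.map_eq]

variable {E : Type*} [NormedAddCommGroup E] [NormedSpace ℝ E] [MeasurableSpace E] [BorelSpace E]

theorem measurePreserving_unitSphereHomeomorph_toSphere {μ : Measure E} {U : E ≃ₗᵢ[ℝ] E}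
    (hU : μ.map U = μ) :
    MeasurePreserving U.unitSphereHomeomorph μ.toSphere μ.toSphere := by
  refine ⟨U.unitSphereHomeomorph.measurable, ext fun s hs => ?_⟩
  have hpre : Ioo (0 : ℝ) 1 • ((↑) '' (U.unitSphereHomeomorph ⁻¹' s) : Set E) =
      U ⁻¹' (Ioo (0 : ℝ) 1 • ((↑) '' s)) := by
    ext x
    constructor
    · rintro ⟨r, hr, _, ⟨y, hy, rfl⟩, rfl⟩
      exact ⟨r, hr, _, ⟨U.unitSphereHomeomorph y, hy, rfl⟩, by simp⟩
    · rintro ⟨r, hr, _, ⟨y, hy, rfl⟩, hx⟩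
      refine ⟨r, hr, _, ⟨U.unitSphereHomeomorph.symm y, by simpa using hy, rfl⟩,
        U.injective ?_⟩
      simpa using hx
  rw [map_apply U.unitSphereHomeomorph.measurable hs, toSphere_apply' _ hs,
    toSphere_apply' _ (U.unitSphereHomeomorph.measurable hs), hpre]
  congr 1
  calc μ (U ⁻¹' _) = μ.map U _ := (U.toHomeomorph.toMeasurableEquiv.map_apply _).symm
    _ = _ := by rw [hU]

def IsIsometryInvariantOnSphere (ν : Measure (sphere (0 : E) 1)) : Prop :=
  ∀ U : E ≃ₗᵢ[ℝ] E, MeasurePreserving U.unitSphereHomeomorph ν ν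

theorem isIsometryInvariantOnSphere_toSphere {E : Type*} [NormedAddCommGroup E]
    [InnerProductSpace ℝ E] [FiniteDimensional ℝ E] [MeasurableSpace E] [BorelSpace E]
    (μ : Measure E) [μ.IsAddHaarMeasure] : μ.toSphere.IsIsometryInvariantOnSphere :=
  fun U => measurePreserving_unitSphereHomeomorph_toSphere (map_linearIsometryEquiv_eq_self μ U)

end Measure

end MeasureTheory

lemma Fin.neZero_of_ne_zero {α : Type*} [Zero α] {n : ℕ} {v : Fin n → α} (hv : v ≠ 0) :
    NeZero n := by
  obtain ⟨i, -⟩ := Function.ne_iff.mp hv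
  exact ⟨i.pos.ne'⟩

lemma sum_normSq_pos_of_ne_zero {ι : Type*} [Fintype ι] {v : ι → ℂ} (hv : v ≠ 0) :
    0 < ∑ i, Complex.normSq (v i) := by
  obtain ⟨i, hi⟩ := Function.ne_iff.mp hv
  exact Finset.sum_pos' (fun i _ => Complex.normSq_nonneg _)
    ⟨i, Finset.mem_univ i, Complex.normSq_pos.mpr hi⟩

namespace EuclideanSpace

variable {ι : Type*} [Fintype ι]

lemma sum_normSq_eq_one_of_mem_sphere {x : EuclideanSpace ℂ ι} (hx : x ∈ sphere 0 1) :
    ∑ i, Complex.normSq (x i) = 1 := by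
  simpa [Complex.normSq_eq_norm_sq, mem_sphere_zero_iff_norm.mp hx] using (norm_sq_eq x).symm

lemma ofLp_ne_zero_of_mem_sphere {x : EuclideanSpace ℂ ι} (hx : x ∈ sphere 0 1) :
    (fun i => x i) ≠ 0 :=
  fun h => ne_zero_of_mem_unit_sphere ⟨x, hx⟩ (WithLp.ofLp_injective 2 h)

variable [DecidableEq ι]

def coordReflection (j : ι) : EuclideanSpace ℂ ι ≃ₗᵢ[ℝ] EuclideanSpace ℂ ι :=
  LinearIsometryEquiv.piLpCongrRight 2
    fun i => if i = j then LinearIsometryEquiv.neg ℝ else LinearIsometryEquiv.refl ℝ ℂ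

lemma coordReflection_apply (j : ι) (x : EuclideanSpace ℂ ι) (i : ι) :
    coordReflection j x i = if i = j then -x i else x i := by
  by_cases h : i = j <;> simp [coordReflection, h]

def coordSwap (j k : ι) : EuclideanSpace ℂ ι ≃ₗᵢ[ℝ] EuclideanSpace ℂ ι :=
  LinearIsometryEquiv.piLpCongrLeft 2 ℝ ℂ (Equiv.swap j k)

lemma coordSwap_apply (j k : ι) (x : EuclideanSpace ℂ ι) (i : ι) :
    coordSwap j k x i = x (Equiv.swap j k i) := by
  simp [coordSwap]

end EuclideanSpace

section SphereMoments

open EuclideanSpace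

variable {ι : Type*} [Fintype ι] [DecidableEq ι]
  [MeasurableSpace (EuclideanSpace ℂ ι)] [BorelSpace (EuclideanSpace ℂ ι)]
  {ν : Measure (sphere (0 : EuclideanSpace ℂ ι) 1)}

lemma integral_conj_mul_coord_of_ne (hν : ν.IsIsometryInvariantOnSphere) {j k : ι}
    (hjk : j ≠ k) :
    ∫ w, conj ((w : EuclideanSpace ℂ ι) j) * (w : EuclideanSpace ℂ ι) k ∂ν = 0 := by
  have h := (hν (coordReflection j)).integral_comp
    (coordReflection j).unitSphereHomeomorph.measurableEmbedding
    fun w => conj ((w : EuclideanSpace ℂ ι) j) * (w : EuclideanSpace ℂ ι) k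
  simp only [LinearIsometryEquiv.coe_unitSphereHomeomorph_apply, coordReflection_apply,
    ↓reduceIte, if_neg hjk.symm, map_neg, neg_mul, integral_neg] at h
  exact neg_eq_self.mp h

variable [IsFiniteMeasure ν]

lemma integral_normSq_coord (hν : ν.IsIsometryInvariantOnSphere) (j : ι) :
    ∫ w, Complex.normSq ((w : EuclideanSpace ℂ ι) j) ∂ν =
      ν.real univ / Fintype.card ι := by
  have hswap (k : ι) : ∫ w, Complex.normSq ((w : EuclideanSpace ℂ ι) k) ∂ν =
      ∫ w, Complex.normSq ((w : EuclideanSpace ℂ ι) j) ∂ν := by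
    simpa [coordSwap_apply] using (hν (coordSwap k j)).integral_comp
      (coordSwap k j).unitSphereHomeomorph.measurableEmbedding
      fun w => Complex.normSq ((w : EuclideanSpace ℂ ι) j)
  have hsum :
      ∑ k, ∫ w, Complex.normSq ((w : EuclideanSpace ℂ ι) k) ∂ν = ν.real univ := by
    rw [← integral_finsetSum _ fun k _ =>
      (by fun_prop : Continuous fun w : sphere (0 : EuclideanSpace ℂ ι) 1 =>
        Complex.normSq ((w : EuclideanSpace ℂ ι) k)).integrable_of_hasCompactSupport
        (.of_compactSpace _)]
    simp [sum_normSq_eq_one_of_mem_sphere]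
  rw [Finset.sum_congr rfl fun k _ => hswap k, Finset.sum_const, Finset.card_univ,
    nsmul_eq_mul] at hsum
  have : Nonempty ι := ⟨j⟩
  have hcard : (Fintype.card ι : ℝ) ≠ 0 := Nat.cast_ne_zero.mpr Fintype.card_ne_zero
  rw [← hsum]
  field_simp

lemma integral_conj_mul_coord (hν : ν.IsIsometryInvariantOnSphere) (j k : ι) :
    ∫ w, conj ((w : EuclideanSpace ℂ ι) j) * (w : EuclideanSpace ℂ ι) k ∂ν =
      if j = k then ((ν.real univ / Fintype.card ι : ℝ) : ℂ) else 0 := by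
  split_ifs with hjk
  · subst hjk
    simp_rw [← Complex.normSq_eq_conj_mul_self, integral_complex_ofReal,
      integral_normSq_coord hν]
  · exact integral_conj_mul_coord_of_ne hν hjk

lemma integral_quadratic_form (hν : ν.IsIsometryInvariantOnSphere) (A : ι → ι → ℂ) :
    ∫ w, ∑ j, ∑ k, A j k *
        (conj ((w : EuclideanSpace ℂ ι) j) * (w : EuclideanSpace ℂ ι) k) ∂ν =
      (∑ j, A j j) * ((ν.real univ / Fintype.card ι : ℝ) : ℂ) := by
  have hint (j k : ι) : Integrable (fun w : sphere (0 : EuclideanSpace ℂ ι) 1 =>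
      A j k * (conj ((w : EuclideanSpace ℂ ι) j) * (w : EuclideanSpace ℂ ι) k)) ν :=
    (by fun_prop : Continuous _).integrable_of_hasCompactSupport (.of_compactSpace _)
  rw [integral_finsetSum _ fun j _ => integrable_finsetSum _ fun k _ => hint j k]
  simp_rw [integral_finsetSum _ fun k _ => hint _ k, integral_const_mul,
    integral_conj_mul_coord hν, mul_ite, mul_zero, Finset.sum_ite_eq, Finset.mem_univ, if_true,
    Finset.sum_mul]

lemma average_re_quadratic_form (hν : ν.IsIsometryInvariantOnSphere) [NeZero ν]
    (A : ι → ι → ℂ) :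
    ⨍ w, (∑ j, ∑ k, A j k *
        (conj ((w : EuclideanSpace ℂ ι) j) * (w : EuclideanSpace ℂ ι) k)).re ∂ν =
      (∑ j, A j j).re / Fintype.card ι := by
  have hint : Integrable (fun w : sphere (0 : EuclideanSpace ℂ ι) 1 => ∑ j, ∑ k, A j k *
      (conj ((w : EuclideanSpace ℂ ι) j) * (w : EuclideanSpace ℂ ι) k)) ν :=
    (by fun_prop : Continuous _).integrable_of_hasCompactSupport (.of_compactSpace _)
  have hν0 : ν.real univ ≠ 0 := measureReal_univ_pos.ne'
  have hre := integral_re hint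
  simp only [RCLike.re_to_complex] at hre
  rw [average_eq, hre, integral_quadratic_form hν, Complex.re_mul_ofReal, smul_eq_mul]
  field_simp

end SphereMoments

lemma sphereMeasure_isIsometryInvariantOnSphere (n : ℕ) :
    (sphereMeasure n).IsIsometryInvariantOnSphere := by
  let := InnerProductSpace.complexToReal (G := EuclideanSpace ℂ (Fin n))
  exact Measure.isIsometryInvariantOnSphere_toSphere _

instance sphereMeasure.instIsFiniteMeasure (n : ℕ) : IsFiniteMeasure (sphereMeasure n) := by
  unfold sphereMeasure
  infer_instance

instance sphereMeasure.instNeZero (n : ℕ) [NeZero n] : NeZero (sphereMeasure n) :=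
  ⟨Measure.toSphere_ne_zero _⟩

namespace HermitianMetricModel

variable {n : ℕ} {M : ComplexManifoldModel n} (g : HermitianMetricModel n M)

/-- The matrix of the Hermitian form `w ↦ ᵗR(v, w̄, w, v̄)`. -/
def hbcAltMatrixRight (t : ℝ) (f : g.Frame) (v : Fin n → ℂ) (j k : Fin n) : ℂ :=
  ∑ i, ∑ l, g.R t f i j k l * v i * conj (v l)

/-- The matrix of the Hermitian form `u ↦ ᵗR(u, w̄, w, ū)`, indexed `(ℓ, i)` as the
coefficient of `ū_ℓ u_i`. -/
def hbcAltMatrixLeft (t : ℝ) (f : g.Frame) (w : Fin n → ℂ) (l i : Fin n) : ℂ :=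
  ∑ j, ∑ k, g.R t f i j k l * conj (w j) * w k

lemma hbcAlt_eq_hbcAltMatrixRight (t : ℝ) (f : g.Frame) (v w : Fin n → ℂ) :
    g.hbcAlt t f v w = (∑ j, ∑ k, g.hbcAltMatrixRight t f v j k * (conj (w j) * w k)).re /
      ((∑ i, Complex.normSq (v i)) * ∑ i, Complex.normSq (w i)) := by
  simp only [hbcAlt, hbcAltMatrixRight, Finset.sum_mul]
  congr 2
  rw [Finset.sum_comm]
  refine Finset.sum_congr rfl fun j _ => ?_
  rw [Finset.sum_comm]
  refine Finset.sum_congr rfl fun k _ => Finset.sum_congr rfl fun i _ =>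
    Finset.sum_congr rfl fun l _ => ?_
  ring

lemma hbcAlt_eq_hbcAltMatrixLeft (t : ℝ) (f : g.Frame) (u w : Fin n → ℂ) :
    g.hbcAlt t f u w = (∑ l, ∑ i, g.hbcAltMatrixLeft t f w l i * (conj (u l) * u i)).re /
      ((∑ i, Complex.normSq (u i)) * ∑ i, Complex.normSq (w i)) := by
  simp only [hbcAlt, hbcAltMatrixLeft, Finset.sum_mul]
  congr 2
  symm
  rw [Finset.sum_comm]
  refine Finset.sum_congr rfl fun i _ => ?_
  rw [Finset.sum_comm]
  refine Finset.sum_congr rfl fun j _ => ?_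
  rw [Finset.sum_comm]
  refine Finset.sum_congr rfl fun k _ => Finset.sum_congr rfl fun l _ => ?_
  ring

lemma sum_hbcAltMatrixRight_diag (t : ℝ) (f : g.Frame) (v : Fin n → ℂ) :
    ∑ j, g.hbcAltMatrixRight t f v j j = ∑ i, ∑ l, g.gRic3 t f i l * v i * conj (v l) := by
  simp only [hbcAltMatrixRight, gRic3, Finset.sum_mul]
  rw [Finset.sum_comm]
  refine Finset.sum_congr rfl fun i _ => ?_
  rw [Finset.sum_comm]

lemma sum_hbcAltMatrixLeft_diag (t : ℝ) (f : g.Frame) (w : Fin n → ℂ) :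
    ∑ l, g.hbcAltMatrixLeft t f w l l = ∑ k, ∑ j, g.gRic4 t f k j * w k * conj (w j) := by
  simp only [hbcAltMatrixLeft, gRic4, Finset.sum_mul]
  rw [Finset.sum_comm_cycle]
  refine Finset.sum_congr rfl fun k _ => ?_
  rw [Finset.sum_comm]
  refine Finset.sum_congr rfl fun j _ => Finset.sum_congr rfl fun i _ => ?_
  ring

lemma hbcAlt_right_on_sphere (t : ℝ) (f : g.Frame) (v : Fin n → ℂ) :
    (fun w : sphere (0 : EuclideanSpace ℂ (Fin n)) 1 =>
        g.hbcAlt t f v (fun i => (w : EuclideanSpace ℂ (Fin n)) i)) =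
      fun w : sphere (0 : EuclideanSpace ℂ (Fin n)) 1 =>
        (∑ j, ∑ k, g.hbcAltMatrixRight t f v j k *
          (conj ((w : EuclideanSpace ℂ (Fin n)) j) * (w : EuclideanSpace ℂ (Fin n)) k)).re /
            ∑ i, Complex.normSq (v i) := by
  simp_rw [hbcAlt_eq_hbcAltMatrixRight,
    EuclideanSpace.sum_normSq_eq_one_of_mem_sphere (Subtype.prop _), mul_one]

lemma hbcAlt_left_on_sphere (t : ℝ) (f : g.Frame) (w : Fin n → ℂ) :
    (fun u : sphere (0 : EuclideanSpace ℂ (Fin n)) 1 =>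
        g.hbcAlt t f (fun i => (u : EuclideanSpace ℂ (Fin n)) i) w) =
      fun u : sphere (0 : EuclideanSpace ℂ (Fin n)) 1 =>
        (∑ l, ∑ i, g.hbcAltMatrixLeft t f w l i *
          (conj ((u : EuclideanSpace ℂ (Fin n)) l) * (u : EuclideanSpace ℂ (Fin n)) i)).re /
            ∑ i, Complex.normSq (w i) := by
  simp_rw [hbcAlt_eq_hbcAltMatrixLeft,
    EuclideanSpace.sum_normSq_eq_one_of_mem_sphere (Subtype.prop _), one_mul]

lemma integrable_hbcAlt_right (t : ℝ) (f : g.Frame) (v : Fin n → ℂ) :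
    Integrable (fun w : sphere (0 : EuclideanSpace ℂ (Fin n)) 1 =>
      g.hbcAlt t f v (fun i => (w : EuclideanSpace ℂ (Fin n)) i)) (sphereMeasure n) := by
  rw [hbcAlt_right_on_sphere]
  exact (by fun_prop : Continuous _).integrable_of_hasCompactSupport (.of_compactSpace _)

lemma integrable_hbcAlt_left (t : ℝ) (f : g.Frame) (w : Fin n → ℂ) :
    Integrable (fun u : sphere (0 : EuclideanSpace ℂ (Fin n)) 1 =>
      g.hbcAlt t f (fun i => (u : EuclideanSpace ℂ (Fin n)) i) w) (sphereMeasure n) := by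
  rw [hbcAlt_left_on_sphere]
  exact (by fun_prop : Continuous _).integrable_of_hasCompactSupport (.of_compactSpace _)

theorem average_hbcAlt_right (t : ℝ) (f : g.Frame) {v : Fin n → ℂ} (hv : v ≠ 0) :
    ⨍ w : sphere (0 : EuclideanSpace ℂ (Fin n)) 1,
        g.hbcAlt t f v (fun i => (w : EuclideanSpace ℂ (Fin n)) i) ∂(sphereMeasure n) =
      (∑ i, ∑ l, g.gRic3 t f i l * v i * conj (v l)).re /
        ((n : ℝ) * ∑ i, Complex.normSq (v i)) := by
  have := Fin.neZero_of_ne_zero hv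
  rw [hbcAlt_right_on_sphere, average_div_const,
    average_re_quadratic_form (sphereMeasure_isIsometryInvariantOnSphere n),
    sum_hbcAltMatrixRight_diag, Fintype.card_fin, div_div, mul_comm]

theorem average_hbcAlt_left (t : ℝ) (f : g.Frame) {w : Fin n → ℂ} (hw : w ≠ 0) :
    ⨍ u : sphere (0 : EuclideanSpace ℂ (Fin n)) 1,
        g.hbcAlt t f (fun i => (u : EuclideanSpace ℂ (Fin n)) i) w ∂(sphereMeasure n) =
      (∑ k, ∑ j, g.gRic4 t f k j * w k * conj (w j)).re /
        ((n : ℝ) * ∑ i, Complex.normSq (w i)) := by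
  have := Fin.neZero_of_ne_zero hw
  rw [hbcAlt_left_on_sphere, average_div_const,
    average_re_quadratic_form (sphereMeasure_isIsometryInvariantOnSphere n),
    sum_hbcAltMatrixLeft_diag, Fintype.card_fin, div_div, mul_comm]

theorem formSigns_of_average_eq {α : g.Frame → Fin n → Fin n → ℂ}
    {F : g.Frame → (Fin n → ℂ) → sphere (0 : EuclideanSpace ℂ (Fin n)) 1 → ℝ}
    (hint : ∀ f v, Integrable (F f v) (sphereMeasure n))
    (havg : ∀ f v, v ≠ 0 → ⨍ w, F f v w ∂(sphereMeasure n) =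
      (∑ i, ∑ j, α f i j * v i * conj (v j)).re / ((n : ℝ) * ∑ i, Complex.normSq (v i))) :
    ((∀ f v w, v ≠ 0 → 0 < F f v w) → g.FormPos α) ∧
    ((∀ f v w, v ≠ 0 → F f v w < 0) → g.FormNeg α) ∧
    ((∀ f v w, v ≠ 0 → 0 ≤ F f v w) → g.FormNonneg α) ∧
    ((∀ f v w, v ≠ 0 → F f v w ≤ 0) → g.FormNonpos α) := by
  have hc {v : Fin n → ℂ} (hv : v ≠ 0) : 0 < (n : ℝ) * ∑ i, Complex.normSq (v i) :=
    mul_pos (Nat.cast_pos.mpr (Fin.neZero_of_ne_zero hv).pos) (sum_normSq_pos_of_ne_zero hv)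
  have hν {v : Fin n → ℂ} (hv : v ≠ 0) : sphereMeasure n ≠ 0 :=
    have := Fin.neZero_of_ne_zero hv
    NeZero.ne _
  have hlow f v (hv : v ≠ 0) : ∃ w, F f v w * ((n : ℝ) * ∑ i, Complex.normSq (v i)) ≤
      (∑ i, ∑ j, α f i j * v i * conj (v j)).re := by
    obtain ⟨w, hw⟩ := exists_le_average (hν hv) (hint f v)
    exact ⟨w, (le_div_iff₀ (hc hv)).mp (havg f v hv ▸ hw)⟩
  have hup f v (hv : v ≠ 0) : ∃ w, (∑ i, ∑ j, α f i j * v i * conj (v j)).re ≤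
      F f v w * ((n : ℝ) * ∑ i, Complex.normSq (v i)) := by
    obtain ⟨w, hw⟩ := exists_average_le (hν hv) (hint f v)
    exact ⟨w, (div_le_iff₀ (hc hv)).mp (havg f v hv ▸ hw)⟩
  refine ⟨fun hF f v hv => ?_, fun hF f v hv => ?_, fun hF f v => ?_, fun hF f v => ?_⟩
  · obtain ⟨w, hw⟩ := hlow f v hv
    exact (mul_pos (hF f v w hv) (hc hv)).trans_le hw
  · obtain ⟨w, hw⟩ := hup f v hv
    exact hw.trans_lt (mul_neg_of_neg_of_pos (hF f v w hv) (hc hv))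
  · rcases eq_or_ne v 0 with rfl | hv
    · simp
    obtain ⟨w, hw⟩ := hlow f v hv
    exact (mul_nonneg (hF f v w hv) (hc hv).le).trans hw
  · rcases eq_or_ne v 0 with rfl | hv
    · simp
    obtain ⟨w, hw⟩ := hup f v hv
    exact hw.trans (mul_nonpos_of_nonpos_of_nonneg (hF f v w hv) (hc hv).le)

end HermitianMetricModel

theorem gauduchon_altered_hbc_dominates_ric3_ric4_general
    {n : ℕ} (M : ComplexManifoldModel n) (g : HermitianMetricModel n M)
    (t : ℝ) :
    (∀ (f : g.Frame) (v : Fin n → ℂ), v ≠ 0 →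
      (⨍ w : Metric.sphere (0 : EuclideanSpace ℂ (Fin n)) 1,
          g.hbcAlt t f v (fun i => (w : EuclideanSpace ℂ (Fin n)) i) ∂(sphereMeasure n)) =
        (∑ i, ∑ l, g.gRic3 t f i l * v i * conj (v l)).re /
          ((n : ℝ) * ∑ i, Complex.normSq (v i))) ∧
    (∀ (f : g.Frame) (w : Fin n → ℂ), w ≠ 0 →
      (⨍ v : Metric.sphere (0 : EuclideanSpace ℂ (Fin n)) 1,
          g.hbcAlt t f (fun i => (v : EuclideanSpace ℂ (Fin n)) i) w ∂(sphereMeasure n)) =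
        (∑ k, ∑ j, g.gRic4 t f k j * w k * conj (w j)).re /
          ((n : ℝ) * ∑ i, Complex.normSq (w i))) ∧
    ((∀ (f : g.Frame) (u v : Fin n → ℂ), u ≠ 0 → v ≠ 0 → 0 < g.hbcAlt t f u v) →
      g.FormPos (g.gRic3 t) ∧ g.FormPos (g.gRic4 t)) ∧
    ((∀ (f : g.Frame) (u v : Fin n → ℂ), u ≠ 0 → v ≠ 0 → g.hbcAlt t f u v < 0) →
      g.FormNeg (g.gRic3 t) ∧ g.FormNeg (g.gRic4 t)) ∧
    ((∀ (f : g.Frame) (u v : Fin n → ℂ), u ≠ 0 → v ≠ 0 → 0 ≤ g.hbcAlt t f u v) →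
      g.FormNonneg (g.gRic3 t) ∧ g.FormNonneg (g.gRic4 t)) ∧
    ((∀ (f : g.Frame) (u v : Fin n → ℂ), u ≠ 0 → v ≠ 0 → g.hbcAlt t f u v ≤ 0) →
      g.FormNonpos (g.gRic3 t) ∧ g.FormNonpos (g.gRic4 t)) := by
  obtain ⟨pos3, neg3, nonneg3, nonpos3⟩ := g.formSigns_of_average_eq
    (F := fun f v w => g.hbcAlt t f v (fun i => (w : EuclideanSpace ℂ (Fin n)) i))
    (g.integrable_hbcAlt_right t) (fun f _ hv => g.average_hbcAlt_right t f hv)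
  obtain ⟨pos4, neg4, nonneg4, nonpos4⟩ := g.formSigns_of_average_eq
    (F := fun f w u => g.hbcAlt t f (fun i => (u : EuclideanSpace ℂ (Fin n)) i) w)
    (g.integrable_hbcAlt_left t) (fun f _ hw => g.average_hbcAlt_left t f hw)
  have hne (w : sphere (0 : EuclideanSpace ℂ (Fin n)) 1) :
      (fun i => (w : EuclideanSpace ℂ (Fin n)) i) ≠ 0 :=
    EuclideanSpace.ofLp_ne_zero_of_mem_sphere w.2
  refine ⟨fun f _ hv => g.average_hbcAlt_right t f hv, fun f _ hw => g.average_hbcAlt_left t f hw,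
    fun h => ⟨pos3 ?_, pos4 ?_⟩, fun h => ⟨neg3 ?_, neg4 ?_⟩,
    fun h => ⟨nonneg3 ?_, nonneg4 ?_⟩, fun h => ⟨nonpos3 ?_, nonpos4 ?_⟩⟩
  · exact fun f v w hv => h f v _ hv (hne w)
  · exact fun f w u hw => h f _ w (hne u) hw
  · exact fun f v w hv => h f v _ hv (hne w)
  · exact fun f w u hw => h f _ w (hne u) hw
  · exact fun f v w hv => h f v _ hv (hne w)
  · exact fun f w u hw => h f _ w (hne u) hw
  · exact fun f v w hv => h f v _ hv (hne w)
  · exact fun f w u hw => h f _ w (hne u) hw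

/-- **Proposition (the altered holomorphic bisectional curvature dominates `Ric⁽³⁾` and
`Ric⁽⁴⁾`).**
Let `(X, ω)` be a compact Hermitian manifold of complex dimension `n` and fix a point
`x ∈ X` (equivalently a local unitary frame `f` at `x`).  For all nonzero
`v, w ∈ T_x^{1,0}X`: the average over the unit sphere of `w ↦ ᵗH̃BC_ω(v, w)` equals
`(1/(n|v|²))·Σ ᵗR_{ik̄kℓ̄} v_i v̄_ℓ` (the `ᵗRic⁽³⁾`-quadratic form), and the average of
`v ↦ ᵗH̃BC_ω(v, w)` equals `(1/(n|w|²))·Σ ᵗR_{ij̄kī} w_k w̄_j` (the `ᵗRic⁽⁴⁾`-quadratic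
form).  In particular the `t`-Gauduchon altered holomorphic bisectional curvature
dominates the third and fourth `t`-Gauduchon Ricci curvatures. -/
theorem gauduchon_altered_hbc_dominates_ric3_ric4
    {n : ℕ} (hn : 0 < n) (M : ComplexManifoldModel n) (g : HermitianMetricModel n M)
    (hcpt : M.IsCompact) (t : ℝ) :
    (∀ (f : g.Frame) (v : Fin n → ℂ), v ≠ 0 →
      (⨍ w : Metric.sphere (0 : EuclideanSpace ℂ (Fin n)) 1,
          g.hbcAlt t f v (fun i => (w : EuclideanSpace ℂ (Fin n)) i) ∂(sphereMeasure n)) =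
        (∑ i, ∑ l, g.gRic3 t f i l * v i * conj (v l)).re /
          ((n : ℝ) * ∑ i, Complex.normSq (v i))) ∧
    (∀ (f : g.Frame) (w : Fin n → ℂ), w ≠ 0 →
      (⨍ v : Metric.sphere (0 : EuclideanSpace ℂ (Fin n)) 1,
          g.hbcAlt t f (fun i => (v : EuclideanSpace ℂ (Fin n)) i) w ∂(sphereMeasure n)) =
        (∑ k, ∑ j, g.gRic4 t f k j * w k * conj (w j)).re /
          ((n : ℝ) * ∑ i, Complex.normSq (w i))) ∧
    ((∀ (f : g.Frame) (u v : Fin n → ℂ), u ≠ 0 → v ≠ 0 → 0 < g.hbcAlt t f u v) →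
      g.FormPos (g.gRic3 t) ∧ g.FormPos (g.gRic4 t)) ∧
    ((∀ (f : g.Frame) (u v : Fin n → ℂ), u ≠ 0 → v ≠ 0 → g.hbcAlt t f u v < 0) →
      g.FormNeg (g.gRic3 t) ∧ g.FormNeg (g.gRic4 t)) ∧
    ((∀ (f : g.Frame) (u v : Fin n → ℂ), u ≠ 0 → v ≠ 0 → 0 ≤ g.hbcAlt t f u v) →
      g.FormNonneg (g.gRic3 t) ∧ g.FormNonneg (g.gRic4 t)) ∧
    ((∀ (f : g.Frame) (u v : Fin n → ℂ), u ≠ 0 → v ≠ 0 → g.hbcAlt t f u v ≤ 0) →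
      g.FormNonpos (g.gRic3 t) ∧ g.FormNonpos (g.gRic4 t)) :=
  gauduchon_altered_hbc_dominates_ric3_ric4_general M g t
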